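/- If P = I - εL is the Perron matrix of a balanced digraph G with Laplacian L whose maximum degree is Δ = max_i Σ_{j≠i} a_{ij}, and ε ∈ (0, 1/Δ], then P is a doubly stochastic matrix (nonnegative, row sums and column sums equal to 1). -/

import Mathlib

/-!
With `d i = ∑ j, A i j` (the diagonal of `A` is zero), the Laplacian `L = diag d - A` kills the
all-ones vector from the right, and, the digraph being balanced, also from the left; hence
`P = I - ε L` has all row and column sums equal to `1`. Off the diagonal `P i j = ε A i j ≥ 0`,
and on it `P i i = 1 - ε d i ≥ 1 - ε Δ ≥ 0`.
-/

open Finset Matrix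

namespace Matrix

variable {ι R : Type*} [DecidableEq ι] [CommRing R]

theorem one_sub_smul_diagonal_sub_nonneg [PartialOrder R] [IsOrderedRing R] {A : Matrix ι ι R}
    (hA : ∀ i j, 0 ≤ A i j) {d : ι → R} {ε : R} (hε : 0 ≤ ε) (hεd : ∀ i, ε * d i ≤ 1)
    (i j : ι) : 0 ≤ (1 - ε • (diagonal d - A)) i j := by
  rcases eq_or_ne i j with rfl | hij
  · simp only [sub_apply, one_apply_eq, smul_apply, diagonal_apply_eq, smul_eq_mul, mul_sub]
    exact sub_nonneg.2 ((sub_le_self _ (mul_nonneg hε (hA i i))).trans (hεd i))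
  · simpa [hij] using mul_nonneg hε (hA i j)

variable [Fintype ι]

def laplacian (A : Matrix ι ι R) : Matrix ι ι R :=
  diagonal (fun i => ∑ j, A i j) - A

theorem laplacian_mulVec_one (A : Matrix ι ι R) : laplacian A *ᵥ 1 = 0 := by
  ext i
  simp [laplacian, mulVec, dotProduct, diagonal_apply]

theorem one_vecMul_laplacian {A : Matrix ι ι R} (hbal : ∀ i, ∑ j, A i j = ∑ j, A j i) :
    1 ᵥ* laplacian A = 0 := by
  ext j
  simp [laplacian, vecMul, dotProduct, diagonal_apply, hbal]

theorem one_sub_smul_mulVec_one {L : Matrix ι ι R} (hL : L *ᵥ 1 = 0) (ε : R) :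
    (1 - ε • L) *ᵥ 1 = 1 := by
  rw [sub_mulVec, one_mulVec, smul_mulVec, hL, smul_zero, sub_zero]

theorem one_vecMul_one_sub_smul {L : Matrix ι ι R} (hL : 1 ᵥ* L = 0) (ε : R) :
    1 ᵥ* (1 - ε • L) = 1 := by
  rw [vecMul_sub, vecMul_one, vecMul_smul, hL, smul_zero, sub_zero]

theorem one_sub_smul_laplacian_mem_doublyStochastic [PartialOrder R] [IsOrderedRing R]
    {A : Matrix ι ι R} (hA : ∀ i j, 0 ≤ A i j) (hbal : ∀ i, ∑ j, A i j = ∑ j, A j i) {ε : R}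
    (hε : 0 ≤ ε) (hεd : ∀ i, ε * ∑ j, A i j ≤ 1) :
    1 - ε • laplacian A ∈ doublyStochastic R ι :=
  ⟨one_sub_smul_diagonal_sub_nonneg hA hε hεd,
    one_sub_smul_mulVec_one (laplacian_mulVec_one A) ε,
    one_vecMul_one_sub_smul (one_vecMul_laplacian hbal) ε⟩

end Matrix

theorem stmt_0_general {n : ℕ} (hn : 0 < n)
    (A : Matrix (Fin n) (Fin n) ℝ)
    (hA : ∀ i j, 0 ≤ A i j) (hAdiag : ∀ i, A i i = 0)
    (hbal : ∀ i, ∑ j, A i j = ∑ j, A j i)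
    (d : Fin n → ℝ) (hd : ∀ i, d i = ∑ j ∈ Finset.univ.filter (fun j => j ≠ i), A i j)
    (L : Matrix (Fin n) (Fin n) ℝ) (hL : L = Matrix.diagonal d - A)
    (Δ : ℝ)
    (hΔ : Δ = Finset.univ.sup' (Finset.univ_nonempty_iff.mpr ⟨⟨0, hn⟩⟩) d)
    (ε : ℝ) (hε0 : 0 < ε) (hε1 : ε ≤ 1 / Δ)
    (P : Matrix (Fin n) (Fin n) ℝ) (hP : P = 1 - ε • L) :
    (∀ i j, 0 ≤ P i j) ∧ (∀ i, ∑ j, P i j = 1) ∧ (∀ j, ∑ i, P i j = 1) := by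
  have hd_eq : d = fun i => ∑ j, A i j := by
    funext i
    rw [hd i, filter_ne', sum_erase _ (hAdiag i)]
  have hΔpos : 0 < Δ := one_div_pos.mp (hε0.trans_le hε1)
  have hεΔ : ε * Δ ≤ 1 := by rwa [le_div_iff₀ hΔpos] at hε1
  have hεd : ∀ i, ε * d i ≤ 1 := fun i =>
    (mul_le_mul_of_nonneg_left (hΔ ▸ le_sup' d (mem_univ i)) hε0.le).trans hεΔ
  subst hP hL hd_eq
  rw [← mem_doublyStochastic_iff_sum]
  exact one_sub_smul_laplacian_mem_doublyStochastic hA hbal hε0.le hεd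

/-- Lemma 3(3) of Olfati-Saber: the Perron matrix `P = I - ε L` of a balanced
digraph with `ε ∈ (0, 1/Δ]` is doubly stochastic. -/
theorem stmt_0 {n : ℕ} (hn : 0 < n)
    (A : Matrix (Fin n) (Fin n) ℝ)
    (hA : ∀ i j, 0 ≤ A i j) (hAdiag : ∀ i, A i i = 0)
    (hbal : ∀ i, ∑ j, A i j = ∑ j, A j i)
    (d : Fin n → ℝ) (hd : ∀ i, d i = ∑ j ∈ Finset.univ.filter (fun j => j ≠ i), A i j)
    (L : Matrix (Fin n) (Fin n) ℝ) (hL : L = Matrix.diagonal d - A)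
    (Δ : ℝ)
    (hΔ : Δ = Finset.univ.sup' (Finset.univ_nonempty_iff.mpr ⟨⟨0, hn⟩⟩) d)
    (hΔpos : 0 < Δ)
    (ε : ℝ) (hε0 : 0 < ε) (hε1 : ε ≤ 1 / Δ)
    (P : Matrix (Fin n) (Fin n) ℝ) (hP : P = 1 - ε • L) :
    (∀ i j, 0 ≤ P i j) ∧ (∀ i, ∑ j, P i j = 1) ∧ (∀ j, ∑ i, P i j = 1) :=
  stmt_0_general hn A hA hAdiag hbal d hd L hL Δ hΔ ε hε0 hε1 P hP
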